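/- For every graph G, the graph Ḡ ⅋ G is provable in GS. -/

import Mathlib

namespace GSP

/-- Atoms: a propositional variable (coded by a natural number) with a polarity. -/
abbrev Atom := ℕ × Bool

/-- The dual atom. -/
def dualAtom (a : Atom) : Atom := (a.1, !a.2)

/-- A finite, simple, undirected graph whose vertices are labelled by atoms. -/
structure LGraph where
  V : Type
  [fintype : Fintype V]
  adj : V → V → Prop
  symm : ∀ {v w : V}, adj v w → adj w v
  irrefl : ∀ v : V, ¬ adj v v
  label : V → Atom

attribute [instance] LGraph.fintype

namespace LGraph

/-- An isomorphism of labelled graphs: a vertex bijection preserving labels and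
preserving and reflecting edges. -/
structure Iso (G H : LGraph) where
  toEquiv : G.V ≃ H.V
  adj_iff : ∀ v w : G.V, G.adj v w ↔ H.adj (toEquiv v) (toEquiv w)
  label_eq : ∀ v : G.V, H.label (toEquiv v) = G.label v

/-- `G ≅ H` : the graphs `G` and `H` are isomorphic. -/
def iso (G H : LGraph) : Prop := Nonempty (Iso G H)

/-- The empty graph. -/
def empty : LGraph where
  V := Empty
  adj _ _ := False
  symm h := h.elim
  irrefl v := v.elim
  label v := v.elim

/-- The single-vertex graph labelled by the atom `a`. -/
def single (a : Atom) : LGraph where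
  V := Unit
  adj _ _ := False
  symm h := h.elim
  irrefl _ h := h
  label _ := a

def parAdj (G H : LGraph) : G.V ⊕ H.V → G.V ⊕ H.V → Prop
  | .inl a, .inl b => G.adj a b
  | .inr a, .inr b => H.adj a b
  | _, _ => False

/-- The par `G ⅋ H` : disjoint union of `G` and `H`. -/
def par (G H : LGraph) : LGraph where
  V := G.V ⊕ H.V
  adj := parAdj G H
  symm := by
    rintro (a | a) (b | b) h
    · exact G.symm h
    · exact h.elim
    · exact h.elim
    · exact H.symm h
  irrefl := by
    rintro (a | a) h
    · exact G.irrefl a h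
    · exact H.irrefl a h
  label := Sum.elim G.label H.label

def tensorAdj (G H : LGraph) : G.V ⊕ H.V → G.V ⊕ H.V → Prop
  | .inl a, .inl b => G.adj a b
  | .inr a, .inr b => H.adj a b
  | .inl _, .inr _ => True
  | .inr _, .inl _ => True

/-- The tensor `G ⊗ H` : join of `G` and `H` (disjoint union plus all edges in between). -/
def tensor (G H : LGraph) : LGraph where
  V := G.V ⊕ H.V
  adj := tensorAdj G H
  symm := by
    rintro (a | a) (b | b) h
    · exact G.symm h
    · exact trivial
    · exact trivial
    · exact H.symm h
  irrefl := by
    rintro (a | a) h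
    · exact G.irrefl a h
    · exact H.irrefl a h
  label := Sum.elim G.label H.label

/-- The dual graph `Ḡ` : same vertices, complemented edges, dualized labels. -/
def dual (G : LGraph) : LGraph where
  V := G.V
  adj v w := v ≠ w ∧ ¬ G.adj v w
  symm h := ⟨fun e => h.1 e.symm, fun h' => h.2 (G.symm h')⟩
  irrefl _ h := h.1 rfl
  label v := dualAtom (G.label v)

def plugAdj (C : LGraph) (R : Set C.V) (X : LGraph) : C.V ⊕ X.V → C.V ⊕ X.V → Prop
  | .inl a, .inl b => C.adj a b
  | .inr a, .inr b => X.adj a b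
  | .inl a, .inr _ => a ∈ R
  | .inr _, .inl b => b ∈ R

/-- `C[X]_R` : the graph obtained from the context `C[·]_R` by inserting the graph `X`
as a module whose vertices are adjacent exactly to the vertices in `R`. -/
def plug (C : LGraph) (R : Set C.V) (X : LGraph) : LGraph where
  V := C.V ⊕ X.V
  adj := plugAdj C R X
  symm := by
    rintro (a | a) (b | b) h
    · exact C.symm h
    · exact h
    · exact h
    · exact X.symm h
  irrefl := by
    rintro (a | a) h
    · exact C.irrefl a h
    · exact X.irrefl a h
  label := Sum.elim C.label X.label

def compAdj (G : LGraph) (H : G.V → LGraph) :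
    (Σ v : G.V, (H v).V) → (Σ v : G.V, (H v).V) → Prop := fun x y =>
  (∃ (v : G.V) (a b : (H v).V), x = ⟨v, a⟩ ∧ y = ⟨v, b⟩ ∧ (H v).adj a b) ∨
    (x.1 ≠ y.1 ∧ G.adj x.1 y.1)

/-- The composition `G⟨H v₁, …, H vₙ⟩` of the family `H` via the graph `G`:
replace each vertex `v` of `G` by the graph `H v`. -/
def comp (G : LGraph) (H : G.V → LGraph) : LGraph where
  V := Σ v : G.V, (H v).V
  adj := compAdj G H
  symm := by
    rintro x y (⟨v, a, b, hx, hy, hab⟩ | ⟨hne, hadj⟩)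
    · exact Or.inl ⟨v, b, a, hy, hx, (H v).symm hab⟩
    · exact Or.inr ⟨hne.symm, G.symm hadj⟩
  irrefl := by
    rintro ⟨v, a⟩ (⟨w, x, y, hx, hy, hxy⟩ | ⟨hne, _⟩)
    · have h := hx.symm.trans hy
      obtain rfl : x = y := by simpa using h
      exact (H w).irrefl x hxy
    · exact hne rfl
  label x := (H x.1).label x.2

/-- A module of `G` : a set `M` of vertices such that every vertex outside `M`
is adjacent either to all vertices of `M` or to none of them. -/
def IsModule (G : LGraph) (M : Set G.V) : Prop :=
  ∀ v ∉ M, ∀ x ∈ M, ∀ y ∈ M, (G.adj v x ↔ G.adj v y)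

/-- A prime graph: at least 2 vertices and only trivial modules. -/
def Prime (G : LGraph) : Prop :=
  2 ≤ Fintype.card G.V ∧
    ∀ M : Set G.V, G.IsModule M → M = ∅ ∨ (∃ v, M = {v}) ∨ M = Set.univ

/-- `G` is `P₄`-free: no four distinct vertices induce a path on 4 vertices. -/
def P4Free (G : LGraph) : Prop :=
  ¬ ∃ v₁ v₂ v₃ v₄ : G.V,
      v₁ ≠ v₂ ∧ v₁ ≠ v₃ ∧ v₁ ≠ v₄ ∧ v₂ ≠ v₃ ∧ v₂ ≠ v₄ ∧ v₃ ≠ v₄ ∧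
      G.adj v₁ v₂ ∧ G.adj v₂ v₃ ∧ G.adj v₃ v₄ ∧
      ¬ G.adj v₁ v₃ ∧ ¬ G.adj v₁ v₄ ∧ ¬ G.adj v₂ v₄

end LGraph

open LGraph

/-- The `n`-fold tensor `X₁ ⊗ ⋯ ⊗ Xₙ`. -/
def bigTensor : (n : ℕ) → (Fin n → LGraph) → LGraph
  | 0, _ => LGraph.empty
  | n + 1, F => (F 0).tensor (bigTensor n fun i => F i.succ)

/-- The `n`-fold par `X₁ ⅋ ⋯ ⅋ Xₙ`. -/
def bigPar : (n : ℕ) → (Fin n → LGraph) → LGraph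
  | 0, _ => LGraph.empty
  | n + 1, F => (F 0).par (bigPar n fun i => F i.succ)

/-- The inference rules of system GS (premise, conclusion). -/
inductive GSRule : LGraph → LGraph → Prop
  /-- ai↓ : premise `∅`, conclusion `ā ⅋ a`. -/
  | ai (a : Atom) : GSRule LGraph.empty ((single (dualAtom a)).par (single a))
  /-- ss↓ : premise `B[A]_S`, conclusion `B ⅋ A`, for `A ≠ ∅` and `S ≠ ∅`. -/
  | ss (A B : LGraph) (S : Set B.V) :
      Nonempty A.V → S ≠ ∅ → GSRule (B.plug S A) (B.par A)
  /-- p↓ : premise `(M₁ ⅋ N₁) ⊗ ⋯ ⊗ (Mₙ ⅋ Nₙ)`, conclusion `P̄⟨M₁,…,Mₙ⟩ ⅋ P⟨N₁,…,Nₙ⟩`,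
  for `P` prime with `n = |V(P)| ≥ 4` and all `Mᵢ ≠ ∅`. -/
  | p (n : ℕ) (P : LGraph) (e : P.V ≃ Fin n) (M N : Fin n → LGraph) :
      P.Prime → 4 ≤ n → (∀ i, Nonempty (M i).V) →
      GSRule (bigTensor n fun i => (M i).par (N i))
        ((P.dual.comp fun v => M (e v)).par (P.comp fun v => N (e v)))

/-- The "up" rules ai↑, ss↑, p↑ (premise, conclusion). -/
inductive UpRule : LGraph → LGraph → Prop
  /-- ai↑ : premise `a ⊗ ā`, conclusion `∅`. -/
  | ai (a : Atom) : UpRule ((single a).tensor (single (dualAtom a))) LGraph.empty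
  /-- ss↑ : premise `B ⊗ A`, conclusion `B[A]_S`, for `A ≠ ∅` and `S ≠ V(B)`. -/
  | ss (A B : LGraph) (S : Set B.V) :
      Nonempty A.V → S ≠ Set.univ → UpRule (B.tensor A) (B.plug S A)
  /-- p↑ : premise `P⟨M₁,…,Mₙ⟩ ⊗ P̄⟨N₁,…,Nₙ⟩`, conclusion `(M₁ ⊗ N₁) ⅋ ⋯ ⅋ (Mₙ ⊗ Nₙ)`,
  for `P` prime with `n = |V(P)| ≥ 4` and all `Mᵢ ≠ ∅`. -/
  | p (n : ℕ) (P : LGraph) (e : P.V ≃ Fin n) (M N : Fin n → LGraph) :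
      P.Prime → 4 ≤ n → (∀ i, Nonempty (M i).V) →
      UpRule ((P.comp fun v => M (e v)).tensor (P.dual.comp fun v => N (e v)))
        (bigPar n fun i => (M i).tensor (N i))

/-- The rules of system SGS : the rules of GS together with their duals. -/
def SGSRule (G H : LGraph) : Prop := GSRule G H ∨ UpRule G H

/-- A single inference step in a system: inside some context, replace a module
isomorphic to the premise of a rule by the corresponding conclusion. -/
def Step (Rules : LGraph → LGraph → Prop) (G H : LGraph) : Prop :=
  ∃ (C : LGraph) (R : Set C.V) (p c : LGraph),
    Rules p c ∧ G.iso (C.plug R p) ∧ H.iso (C.plug R c)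

/-- A derivation in a system from `G` to `H` : a finite sequence of inference steps
and isomorphisms leading from `G` to `H`. -/
def Deriv (Rules : LGraph → LGraph → Prop) (G H : LGraph) : Prop :=
  Relation.ReflTransGen (fun X Y => X.iso Y ∨ Step Rules X Y) G H

/-- A graph is provable in a system if there is a derivation from `∅` to it. -/
def Provable (Rules : LGraph → LGraph → Prop) (G : LGraph) : Prop :=
  Deriv Rules LGraph.empty G

/-- Formulas: unit, positive and negative atoms, par and tensor. -/
inductive Formula where
  | unit : Formula
  | pos (a : ℕ) : Formula
  | neg (a : ℕ) : Formula
  | par (φ ψ : Formula) : Formula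
  | tens (φ ψ : Formula) : Formula

/-- The graph `[φ]` of a formula `φ`. -/
def Formula.graph : Formula → LGraph
  | .unit => LGraph.empty
  | .pos a => single (a, true)
  | .neg a => single (a, false)
  | .par φ ψ => φ.graph.par ψ.graph
  | .tens φ ψ => φ.graph.tensor ψ.graph

/-- Structural equivalence of formulas: the smallest congruence making `⅋` and `⊗`
associative and commutative with unit `∘`. -/
inductive Formula.equiv : Formula → Formula → Prop
  | refl (φ) : Formula.equiv φ φ
  | symm {φ ψ} : Formula.equiv φ ψ → Formula.equiv ψ φ
  | trans {φ ψ χ} : Formula.equiv φ ψ → Formula.equiv ψ χ → Formula.equiv φ χ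
  | parComm (φ ψ) : Formula.equiv (.par φ ψ) (.par ψ φ)
  | parAssoc (φ ψ χ) : Formula.equiv (.par φ (.par ψ χ)) (.par (.par φ ψ) χ)
  | parUnit (φ) : Formula.equiv (.par φ .unit) φ
  | tensComm (φ ψ) : Formula.equiv (.tens φ ψ) (.tens ψ φ)
  | tensAssoc (φ ψ χ) : Formula.equiv (.tens φ (.tens ψ χ)) (.tens (.tens φ ψ) χ)
  | tensUnit (φ) : Formula.equiv (.tens φ .unit) φ
  | parCongr {φ φ' ψ ψ'} : Formula.equiv φ φ' → Formula.equiv ψ ψ' →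
      Formula.equiv (.par φ ψ) (.par φ' ψ')
  | tensCongr {φ φ' ψ ψ'} : Formula.equiv φ φ' → Formula.equiv ψ ψ' →
      Formula.equiv (.tens φ ψ) (.tens φ' ψ')

/-- A formula is unit-free if it contains no occurrence of the unit `∘`. -/
def Formula.UnitFree : Formula → Prop
  | .unit => False
  | .pos _ => True
  | .neg _ => True
  | .par φ ψ => φ.UnitFree ∧ ψ.UnitFree
  | .tens φ ψ => φ.UnitFree ∧ ψ.UnitFree

/-- The sequent calculus MLL° (multiplicative linear logic with mix) on multisets
of formulas. -/
inductive MLL : Multiset Formula → Prop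
  | ax (a : ℕ) : MLL {Formula.pos a, Formula.neg a}
  | tens {Γ Δ : Multiset Formula} (φ ψ : Formula) :
      MLL (φ ::ₘ Γ) → MLL (ψ ::ₘ Δ) → MLL (Formula.tens φ ψ ::ₘ (Γ + Δ))
  | par {Γ : Multiset Formula} (φ ψ : Formula) :
      MLL (φ ::ₘ ψ ::ₘ Γ) → MLL (Formula.par φ ψ ::ₘ Γ)
  | mix {Γ Δ : Multiset Formula} : MLL Γ → MLL Δ → MLL (Γ + Δ)

/-!
Induction on the number of vertices; graphs with at most one vertex give `∅` or an instance
of `ai↓`. If `G ≅ A ⅋ B` is disconnected, then `Ḡ ⅋ G ≅ (Ā ⊗ B̄) ⅋ (A ⅋ B)` follows from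
`Ā ⅋ A` and `B̄ ⅋ B` by the tensor rule of linear logic, which a single `ss↓` step derives.
If `Ḡ` is disconnected, the same argument applies to `Ḡ`, whose dual is `G`. If `G` and `Ḡ`
are both connected, Gallai's theorem gives `G ≅ P⟨H₁, …, Hₙ⟩` where the `Hᵢ` are the maximal
proper modules and `P` is prime; `P` is connected and co-connected like `G`, which forces
`n ≥ 4`, so one `p↓` step turns `(H̄₁ ⅋ H₁) ⊗ ⋯ ⊗ (H̄ₙ ⅋ Hₙ)` into `Ḡ ⅋ G`.
-/

theorem dualAtom_dualAtom (a : Atom) : dualAtom (dualAtom a) = a := by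
  simp [dualAtom]

open Set

namespace LGraph

theorem iso.refl (G : LGraph) : G.iso G :=
  ⟨⟨Equiv.refl _, fun _ _ => Iff.rfl, fun _ => rfl⟩⟩

theorem iso.symm {G H : LGraph} : G.iso H → H.iso G
  | ⟨f⟩ => ⟨⟨f.toEquiv.symm, fun v w => by simp [f.adj_iff],
      fun v => by simpa using (f.label_eq (f.toEquiv.symm v)).symm⟩⟩

theorem iso.trans {G H K : LGraph} : G.iso H → H.iso K → G.iso K
  | ⟨f⟩, ⟨g⟩ => ⟨⟨f.toEquiv.trans g.toEquiv, fun v w => (f.adj_iff v w).trans (g.adj_iff _ _),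
      fun v => (g.label_eq _).trans (f.label_eq v)⟩⟩

instance : IsEmpty empty.V := inferInstanceAs (IsEmpty Empty)

theorem iso_of_isEmpty {G H : LGraph} [IsEmpty G.V] [IsEmpty H.V] : G.iso H :=
  ⟨⟨Equiv.equivOfIsEmpty _ _, isEmptyElim, isEmptyElim⟩⟩

theorem single_iso {G : LGraph} (v : G.V) [Subsingleton G.V] : (single (G.label v)).iso G :=
  have : Unique G.V := uniqueOfSubsingleton v
  ⟨⟨Equiv.ofUnique Unit G.V, fun _ _ => iff_of_false id (G.irrefl _),
    fun _ => congrArg G.label (Subsingleton.elim _ _)⟩⟩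

theorem par_congr {A A' B B' : LGraph} : A.iso A' → B.iso B' → (A.par B).iso (A'.par B')
  | ⟨f⟩, ⟨g⟩ => ⟨⟨Equiv.sumCongr f.toEquiv g.toEquiv,
      by rintro (v | v) (w | w); exacts [f.adj_iff v w, Iff.rfl, Iff.rfl, g.adj_iff v w],
      by rintro (v | v); exacts [f.label_eq v, g.label_eq v]⟩⟩

theorem dual_congr {A B : LGraph} : A.iso B → A.dual.iso B.dual
  | ⟨f⟩ => ⟨⟨f.toEquiv,
      fun v w => and_congr f.toEquiv.injective.ne_iff.symm (f.adj_iff v w).not,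
      fun v => congrArg dualAtom (f.label_eq v)⟩⟩

theorem plug_congr {C X Y : LGraph} (R : Set C.V) : X.iso Y → (C.plug R X).iso (C.plug R Y)
  | ⟨f⟩ => ⟨⟨Equiv.sumCongr (Equiv.refl _) f.toEquiv,
      by rintro (v | v) (w | w); exacts [Iff.rfl, Iff.rfl, Iff.rfl, f.adj_iff v w],
      by rintro (v | v); exacts [rfl, f.label_eq v]⟩⟩

theorem par_comm (A B : LGraph) : (A.par B).iso (B.par A) :=
  ⟨⟨Equiv.sumComm _ _, by rintro (v | v) (w | w) <;> exact Iff.rfl,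
    by rintro (v | v) <;> rfl⟩⟩

theorem dual_dual (G : LGraph) : G.dual.dual.iso G :=
  ⟨⟨Equiv.refl _, fun v w => by
      change v ≠ w ∧ ¬ (v ≠ w ∧ ¬ G.adj v w) ↔ G.adj v w
      by_cases h : v = w
      · subst h; simpa using G.irrefl v
      · simp [h],
    fun v => (dualAtom_dualAtom _).symm⟩⟩

theorem dual_par (A B : LGraph) : (A.par B).dual.iso (A.dual.tensor B.dual) :=
  ⟨⟨Equiv.refl _, by
      rintro (v | v) (w | w)
      · exact and_congr_left' Sum.inl_injective.ne_iff
      · exact iff_of_true ⟨Sum.inl_ne_inr, not_false⟩ trivial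
      · exact iff_of_true ⟨Sum.inr_ne_inl, not_false⟩ trivial
      · exact and_congr_left' Sum.inr_injective.ne_iff,
    by rintro (v | v) <;> rfl⟩⟩

theorem plug_empty (C : LGraph) (R : Set C.V) : (C.plug R empty).iso C :=
  ⟨⟨Equiv.sumEmpty _ _, by rintro (v | ⟨⟨⟩⟩) (w | ⟨⟨⟩⟩); exact Iff.rfl,
    by rintro (v | ⟨⟨⟩⟩); rfl⟩⟩

theorem empty_plug (R : Set empty.V) (X : LGraph) : (empty.plug R X).iso X :=
  ⟨⟨Equiv.emptySum _ _, by rintro (⟨⟨⟩⟩ | v) (⟨⟨⟩⟩ | w); exact Iff.rfl,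
    by rintro (⟨⟨⟩⟩ | v); rfl⟩⟩

theorem plug_univ (C X : LGraph) : (C.plug univ X).iso (C.tensor X) :=
  ⟨⟨Equiv.refl _, by rintro (v | v) (w | w) <;> exact Iff.rfl, by rintro (v | v) <;> rfl⟩⟩

theorem plug_plug (C : LGraph) (R : Set C.V) (C' : LGraph) (R' : Set C'.V) (X : LGraph) :
    (C.plug R (C'.plug R' X)).iso ((C.plug R C').plug (Sum.elim R R') X) :=
  ⟨⟨(Equiv.sumAssoc _ _ _).symm, by rintro (v | v | v) (w | w | w) <;> exact Iff.rfl,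
    by rintro (v | v | v) <;> rfl⟩⟩

theorem comp_adj_mk_same {P : LGraph} {H : P.V → LGraph} {v : P.V} {a b : (H v).V} :
    (P.comp H).adj ⟨v, a⟩ ⟨v, b⟩ ↔ (H v).adj a b := by
  refine ⟨?_, fun h => Or.inl ⟨v, a, b, rfl, rfl, h⟩⟩
  rintro (⟨u, a', b', ha, hb, h⟩ | ⟨hne, -⟩)
  · obtain ⟨rfl, ha⟩ := Sigma.mk.inj_iff.mp ha
    cases ha
    cases (Sigma.mk.inj_iff.mp hb).2
    exact h
  · exact absurd rfl hne

theorem comp_adj_of_fst_ne {P : LGraph} {H : P.V → LGraph} {x y : (P.comp H).V}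
    (hxy : x.1 ≠ y.1) : (P.comp H).adj x y ↔ P.adj x.1 y.1 := by
  refine ⟨?_, fun h => Or.inr ⟨hxy, h⟩⟩
  rintro (⟨u, a, b, rfl, rfl, -⟩ | ⟨-, h⟩)
  · exact absurd rfl hxy
  · exact h

theorem dual_comp (P : LGraph) (H : P.V → LGraph) :
    (P.comp H).dual.iso (P.dual.comp fun v => (H v).dual) := by
  refine ⟨⟨Equiv.refl _, ?_, fun _ => rfl⟩⟩
  rintro ⟨v, a⟩ ⟨w, b⟩
  change _ ∧ ¬ (P.comp H).adj ⟨v, a⟩ ⟨w, b⟩ ↔ (P.dual.comp fun v => (H v).dual).adj ⟨v, a⟩ ⟨w, b⟩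
  by_cases hvw : v = w
  · subst hvw
    exact (and_congr sigma_mk_injective.ne_iff comp_adj_mk_same.not).trans
      (comp_adj_mk_same (P := P.dual) (H := fun v => (H v).dual)).symm
  · have hne : (⟨v, a⟩ : (P.comp H).V) ≠ ⟨w, b⟩ := fun h => hvw (congrArg Sigma.fst h)
    exact (and_congr (iff_of_true hne hvw) (comp_adj_of_fst_ne (y := ⟨w, b⟩) hvw).not).trans
      (comp_adj_of_fst_ne (P := P.dual) (H := fun v => (H v).dual) (x := ⟨v, a⟩)
        (y := ⟨w, b⟩) hvw).symm

noncomputable def induce (G : LGraph) (K : Set G.V) : LGraph where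
  V := K
  fintype := Fintype.ofFinite K
  adj v w := G.adj v w
  symm := G.symm
  irrefl v := G.irrefl v
  label v := G.label v

theorem card_induce_lt {G : LGraph} {K : Set G.V} (hK : K ≠ univ) :
    Fintype.card (G.induce K).V < Fintype.card G.V :=
  have ⟨_, hv⟩ := (ne_univ_iff_exists_notMem K).1 hK
  letI : Fintype K := (G.induce K).fintype
  Fintype.card_subtype_lt hv

theorem par_induce_iso {G : LGraph} {K : Set G.V} (hK : ∀ v ∈ K, ∀ w ∉ K, ¬ G.adj v w) :
    ((G.induce K).par (G.induce Kᶜ)).iso G := by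
  classical
  refine ⟨⟨Equiv.sumCompl (· ∈ K), ?_, by rintro (v | v) <;> rfl⟩⟩
  rintro (⟨v, hv⟩ | ⟨v, hv⟩) (⟨w, hw⟩ | ⟨w, hw⟩)
  · exact Iff.rfl
  · exact iff_of_false id (hK v hv w hw)
  · exact iff_of_false id fun h => hK w hw v hv (G.symm h)
  · exact Iff.rfl

theorem adj_comm (G : LGraph) (v w : G.V) : G.adj v w ↔ G.adj w v :=
  ⟨G.symm, G.symm⟩

def Connected (G : LGraph) : Prop :=
  ∀ K : Set G.V, K.Nonempty → K ≠ univ → ∃ v ∈ K, ∃ w ∉ K, G.adj v w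

theorem Connected.of_surjective {G Q : LGraph} {π : G.V → Q.V} (hπ : π.Surjective)
    (hadj : ∀ v w, π v ≠ π w → G.adj v w → Q.adj (π v) (π w)) (hG : G.Connected) :
    Q.Connected := by
  intro K hK hKu
  obtain ⟨v, hv, w, hw, h⟩ := hG (π ⁻¹' K) (hK.preimage hπ)
    fun hU => hKu (preimage_injective.2 hπ (hU.trans preimage_univ.symm))
  exact ⟨π v, hv, π w, hw, hadj v w (fun h => hw (show π w ∈ K from h ▸ hv)) h⟩

theorem four_le_card {G : LGraph} [Nontrivial G.V] (hG : G.Connected)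
    (hGd : G.dual.Connected) : 4 ≤ Fintype.card G.V := by
  have hadj v : ∃ w, G.adj v w := by
    obtain ⟨_, rfl, w, -, h⟩ := hG {v} (singleton_nonempty v) (singleton_ne_univ v)
    exact ⟨w, h⟩
  have hnonadj v : ∃ w, w ≠ v ∧ ¬ G.adj v w := by
    obtain ⟨_, rfl, w, -, h⟩ := hGd {v} (singleton_nonempty v) (singleton_ne_univ v)
    exact ⟨w, Ne.symm h.1, h.2⟩
  obtain ⟨x⟩ := ‹Nontrivial G.V›.to_nonempty
  obtain ⟨y, hxy⟩ := hadj x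
  obtain ⟨z, hzx, hxz⟩ := hnonadj x
  have hyx : y ≠ x := fun h => G.irrefl x (h ▸ hxy)
  have hzy : z ≠ y := fun h => hxz (h ▸ hxy)
  suffices ∃ u, u ≠ x ∧ u ≠ y ∧ u ≠ z by
    obtain ⟨u, hux, huy, huz⟩ := this
    rw [← Finset.card_univ]
    exact Finset.three_lt_card_iff.2 ⟨x, y, z, u, by simp, by simp, by simp, by simp,
      hyx.symm, hzx.symm, hux.symm, hzy.symm, huy.symm, huz.symm⟩
  obtain ⟨w, hzw⟩ := hadj z
  by_cases hwy : w = y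
  · -- `y` is adjacent to `x` and `z`, so its non-neighbour is a fourth vertex
    subst hwy
    obtain ⟨u, huw, hwu⟩ := hnonadj w
    exact ⟨u, fun h => hwu (h ▸ G.symm hxy), huw, fun h => hwu (h ▸ G.symm hzw)⟩
  · exact ⟨w, fun h => hxz (G.symm (h ▸ hzw)), hwy, fun h => G.irrefl z (h ▸ hzw)⟩

theorem isModule_singleton (G : LGraph) (v : G.V) : G.IsModule {v} := by
  rintro _ _ _ rfl _ rfl
  exact Iff.rfl

theorem IsModule.union {G : LGraph} {M N : Set G.V} (hM : G.IsModule M) (hN : G.IsModule N)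
    (hMN : (M ∩ N).Nonempty) : G.IsModule (M ∪ N) := by
  obtain ⟨z, hzM, hzN⟩ := hMN
  have hz : ∀ v ∉ M ∪ N, ∀ x ∈ M ∪ N, G.adj v x ↔ G.adj v z := by
    rintro v hv x (hx | hx)
    · exact hM v (fun h => hv (.inl h)) x hx z hzM
    · exact hN v (fun h => hv (.inr h)) x hx z hzN
  exact fun v hv x hx y hy => (hz v hv x hx).trans (hz v hv y hy).symm

theorem IsModule.adj_iff_adj {G : LGraph} {M N : Set G.V} (hM : G.IsModule M)
    (hN : G.IsModule N) (hMN : Disjoint M N) {x x' y y' : G.V} (hx : x ∈ M) (hx' : x' ∈ M)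
    (hy : y ∈ N) (hy' : y' ∈ N) : G.adj x y ↔ G.adj x' y' :=
  calc G.adj x y ↔ G.adj y x := G.adj_comm x y
    _ ↔ G.adj y x' := hM y (disjoint_right.1 hMN hy) x hx x' hx'
    _ ↔ G.adj x' y := G.adj_comm y x'
    _ ↔ G.adj x' y' := hN x' (disjoint_left.1 hMN hx') y hy y' hy'

theorem IsModule.union_ne_univ {G : LGraph} (hG : G.Connected) (hGd : G.dual.Connected)
    {M N : Set G.V} (hM : G.IsModule M) (hN : G.IsModule N) (hMu : M ≠ univ) (hNu : N ≠ univ)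
    (hMN : (M ∩ N).Nonempty) : M ∪ N ≠ univ := by
  intro hU
  obtain ⟨z, -, hzN⟩ := hMN
  obtain ⟨x, hxM, hxN⟩ : (M \ N).Nonempty :=
    sdiff_nonempty.2 fun h => hNu (by rw [← hU, union_eq_right.2 h])
  obtain ⟨y, hyN, hyM⟩ : (N \ M).Nonempty :=
    sdiff_nonempty.2 fun h => hMu (by rw [← hU, union_eq_left.2 h])
  -- `M \ N` would split `G` or `Ḡ`: its edges to its complement `N` are all present or all absent.
  have huniform : ∀ a ∈ M \ N, ∀ b ∉ M \ N, G.adj a b ↔ G.adj x y := by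
    rintro a ⟨haM, haN⟩ b hb
    have hbN : b ∈ N := by
      by_contra hbN
      exact hb ⟨(hU ▸ mem_univ b : b ∈ M ∪ N).resolve_right hbN, hbN⟩
    calc G.adj a b ↔ G.adj a y := hN a haN b hbN y hyN
      _ ↔ G.adj y a := G.adj_comm a y
      _ ↔ G.adj y x := hM y hyM a haM x hxM
      _ ↔ G.adj x y := G.adj_comm y x
  have hK : M \ N ≠ univ := fun h => (h ▸ mem_univ z : z ∈ M \ N).2 hzN
  by_cases hxy : G.adj x y
  · obtain ⟨a, ha, b, hb, hab⟩ := hGd (M \ N) ⟨x, hxM, hxN⟩ hK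
    exact hab.2 ((huniform a ha b hb).2 hxy)
  · obtain ⟨a, ha, b, hb, hab⟩ := hG (M \ N) ⟨x, hxM, hxN⟩ hK
    exact hxy ((huniform a ha b hb).1 hab)

theorem exists_maximal_module {G : LGraph} [Nontrivial G.V] (hG : G.Connected)
    (hGd : G.dual.Connected) (v : G.V) :
    ∃ M, G.IsModule M ∧ M ≠ univ ∧ v ∈ M ∧
      ∀ N, G.IsModule N → N ≠ univ → v ∈ N → N ⊆ M := by
  let S := {M : Set G.V | G.IsModule M ∧ M ≠ univ ∧ v ∈ M}
  obtain ⟨M, ⟨hM, hMu, hvM⟩, hmax⟩ := S.toFinite.exists_maximal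
    ⟨{v}, G.isModule_singleton v, singleton_ne_univ v, rfl⟩
  refine ⟨M, hM, hMu, hvM, fun N hN hNu hvN => ?_⟩
  have hMN : (M ∩ N).Nonempty := ⟨v, hvM, hvN⟩
  have hU : M ∪ N ∈ S := ⟨hM.union hN hMN, hM.union_ne_univ hG hGd hN hMu hNu hMN, .inl hvM⟩
  exact subset_union_right.trans (hmax hU subset_union_left)

structure IsModularPartition (G : LGraph) (M : G.V → Set G.V) : Prop where
  mem_self : ∀ v, v ∈ M v
  isModule : ∀ v, G.IsModule (M v)
  eq_of_mem : ∀ {v w}, w ∈ M v → M w = M v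

/-- Labels are irrelevant here: `comp` only reads the labels of the inserted graphs. -/
noncomputable def quotient (G : LGraph) (M : G.V → Set G.V) : LGraph where
  V := range M
  fintype := Fintype.ofFinite _
  adj q r := q ≠ r ∧ ∃ u ∈ q.1, ∃ w ∈ r.1, G.adj u w
  symm := fun ⟨hne, u, hu, w, hw, h⟩ => ⟨hne.symm, w, hw, u, hu, G.symm h⟩
  irrefl _ h := h.1 rfl
  label _ := (0, true)

namespace IsModularPartition

variable {G : LGraph} {M : G.V → Set G.V} (hM : G.IsModularPartition M)
include hM

theorem isModule_block (q : (G.quotient M).V) : G.IsModule q.1 := by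
  obtain ⟨_, v, rfl⟩ := q
  exact hM.isModule v

theorem disjoint_block {q r : (G.quotient M).V} (hqr : q ≠ r) : Disjoint q.1 r.1 := by
  obtain ⟨_, v, rfl⟩ := q
  obtain ⟨_, w, rfl⟩ := r
  refine disjoint_left.2 fun u hv hw => hqr (Subtype.ext ?_)
  exact (hM.eq_of_mem hv).symm.trans (hM.eq_of_mem hw)

theorem quotient_adj_iff {q r : (G.quotient M).V} (hqr : q ≠ r) {u w : G.V} (hu : u ∈ q.1)
    (hw : w ∈ r.1) : (G.quotient M).adj q r ↔ G.adj u w :=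
  ⟨fun ⟨_, _, hu', _, hw', h⟩ =>
      ((hM.isModule_block q).adj_iff_adj (hM.isModule_block r) (hM.disjoint_block hqr)
        hu' hu hw' hw).1 h,
    fun h => ⟨hqr, u, hu, w, hw, h⟩⟩

theorem comp_quotient_iso : ((G.quotient M).comp fun q => G.induce q.1).iso G := by
  refine ⟨⟨{ toFun := fun z => z.2.1
             invFun := fun v => ⟨rangeFactorization M v, v, hM.mem_self v⟩
             left_inv := ?_
             right_inv := fun _ => rfl }, ?_, fun _ => rfl⟩⟩
  · rintro ⟨⟨_, u, rfl⟩, x, hx⟩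
    exact Sigma.subtype_ext (Subtype.ext (hM.eq_of_mem hx)) rfl
  · rintro ⟨q, x, hx⟩ ⟨r, y, hy⟩
    by_cases hqr : q = r
    · subst hqr
      exact comp_adj_mk_same
    · exact (comp_adj_of_fst_ne hqr).trans (hM.quotient_adj_iff hqr hx hy)

theorem connected_quotient (hG : G.Connected) : (G.quotient M).Connected :=
  hG.of_surjective rangeFactorization_surjective fun v w hne h =>
    ⟨hne, v, hM.mem_self v, w, hM.mem_self w, h⟩

theorem connected_dual_quotient (hGd : G.dual.Connected) : (G.quotient M).dual.Connected :=
  hGd.of_surjective (G := G.dual) (Q := (G.quotient M).dual) rangeFactorization_surjective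
    fun v w hne (h : v ≠ w ∧ ¬ G.adj v w) =>
      ⟨hne, fun hq => h.2 ((hM.quotient_adj_iff hne (hM.mem_self v) (hM.mem_self w)).1 hq)⟩

theorem isModule_preimage {Q : Set (G.quotient M).V} (hQ : (G.quotient M).IsModule Q) :
    G.IsModule (rangeFactorization M ⁻¹' Q) := by
  intro v hv x hx y hy
  have hne : ∀ {z}, z ∈ rangeFactorization M ⁻¹' Q →
      rangeFactorization M v ≠ rangeFactorization M z :=
    fun hz h => hv (show rangeFactorization M v ∈ Q from h ▸ hz)
  calc G.adj v x ↔ (G.quotient M).adj (rangeFactorization M v) (rangeFactorization M x) :=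
        (hM.quotient_adj_iff (hne hx) (hM.mem_self v) (hM.mem_self x)).symm
    _ ↔ (G.quotient M).adj (rangeFactorization M v) (rangeFactorization M y) :=
        hQ _ hv _ hx _ hy
    _ ↔ G.adj v y := hM.quotient_adj_iff (hne hy) (hM.mem_self v) (hM.mem_self y)

theorem prime_quotient (hmax : ∀ v N, G.IsModule N → N ≠ univ → v ∈ N → N ⊆ M v)
    (h2 : 2 ≤ Fintype.card (G.quotient M).V) : (G.quotient M).Prime := by
  refine ⟨h2, fun Q hQ => ?_⟩
  let U := rangeFactorization M ⁻¹' Q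
  by_cases hU : U = univ
  · refine .inr (.inr (eq_univ_of_forall fun q => ?_))
    obtain ⟨v, rfl⟩ := rangeFactorization_surjective q
    exact eq_univ_iff_forall.1 hU v
  rcases Q.eq_empty_or_nonempty with hQ | ⟨q, hq⟩
  · exact .inl hQ
  obtain ⟨v, rfl⟩ := rangeFactorization_surjective q
  refine .inr (.inl ⟨_, eq_singleton_iff_unique_mem.2 ⟨hq, fun r hr => ?_⟩⟩)
  obtain ⟨w, rfl⟩ := rangeFactorization_surjective r
  exact Subtype.ext (hM.eq_of_mem (hmax v U (hM.isModule_preimage hQ) hU hq hr))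

end IsModularPartition

/-- Gallai's decomposition: the maximal proper modules of a connected and co-connected graph
partition its vertices, and the quotient by them is prime. -/
theorem exists_prime_comp_iso {G : LGraph} [Nontrivial G.V] (hG : G.Connected)
    (hGd : G.dual.Connected) :
    ∃ (P : LGraph) (H : P.V → LGraph), P.Prime ∧ 4 ≤ Fintype.card P.V ∧
      (∀ p, Nonempty (H p).V) ∧ (∀ p, Fintype.card (H p).V < Fintype.card G.V) ∧
      (P.comp H).iso G := by
  choose M hMmod hMu hMmem hMmax using exists_maximal_module hG hGd
  have hM : G.IsModularPartition M := by
    refine ⟨hMmem, hMmod, fun {v w} hw => subset_antisymm ?_ (hMmax w _ (hMmod v) (hMu v) hw)⟩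
    have hwv : (M w ∩ M v).Nonempty := ⟨w, hMmem w, hw⟩
    exact subset_union_left.trans <| hMmax v _ ((hMmod w).union (hMmod v) hwv)
      ((hMmod w).union_ne_univ hG hGd (hMmod v) (hMu w) (hMu v) hwv) (.inr (hMmem v))
  have : Nontrivial (G.quotient M).V := by
    obtain ⟨v⟩ := ‹Nontrivial G.V›.to_nonempty
    obtain ⟨w, hw⟩ := (ne_univ_iff_exists_notMem _).1 (hMu v)
    refine ⟨rangeFactorization M v, rangeFactorization M w, fun h => hw ?_⟩
    rw [show M v = M w from congrArg Subtype.val h]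
    exact hMmem w
  have h4 := four_le_card (hM.connected_quotient hG) (hM.connected_dual_quotient hGd)
  exact ⟨G.quotient M, fun q => G.induce q.1, hM.prime_quotient hMmax (by omega), h4,
    fun ⟨_, v, rfl⟩ => ⟨⟨v, hMmem v⟩⟩, fun ⟨_, v, rfl⟩ => card_induce_lt (hMu v),
    hM.comp_quotient_iso⟩

end LGraph

section Derivations

variable {Rules : LGraph → LGraph → Prop} {G H K : LGraph}

theorem Deriv.of_iso (h : G.iso H) : Deriv Rules G H :=
  .single (Or.inl h)

theorem Deriv.trans (h : Deriv Rules G H) (h' : Deriv Rules H K) : Deriv Rules G K :=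
  Relation.ReflTransGen.trans h h'

theorem Deriv.of_rule_in_context {C p c : LGraph} (R : Set C.V) (hr : Rules p c)
    (hG : G.iso (C.plug R p)) (hH : H.iso (C.plug R c)) : Deriv Rules G H :=
  .single (Or.inr ⟨C, R, p, c, hr, hG, hH⟩)

theorem Deriv.of_rule (hr : Rules G H) : Deriv Rules G H :=
  .of_rule_in_context (C := empty) ∅ hr (empty_plug ∅ G).symm (empty_plug ∅ H).symm

theorem Deriv.plug (C : LGraph) (R : Set C.V) (h : Deriv Rules G H) :
    Deriv Rules (C.plug R G) (C.plug R H) := by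
  induction h with
  | refl => exact .refl
  | tail _ hstep ih =>
    refine ih.tail ?_
    rcases hstep with hiso | ⟨C', R', p, c, hr, hp, hc⟩
    · exact Or.inl (plug_congr R hiso)
    · exact Or.inr ⟨C.plug R C', Sum.elim R R', p, c, hr,
        (plug_congr R hp).trans (plug_plug C R C' R' p),
        (plug_congr R hc).trans (plug_plug C R C' R' c)⟩

theorem Provable.deriv (hG : Provable Rules G) (h : Deriv Rules G H) : Provable Rules H :=
  Deriv.trans hG h

theorem Provable.of_iso (hG : Provable Rules G) (h : G.iso H) : Provable Rules H :=
  hG.deriv (.of_iso h)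

theorem Provable.plug {C X : LGraph} (R : Set C.V) (hC : Provable Rules C)
    (hX : Provable Rules X) : Provable Rules (C.plug R X) :=
  (hC.of_iso (plug_empty C R).symm).deriv (Deriv.plug C R hX)

theorem Provable.tensor {C X : LGraph} (hC : Provable Rules C) (hX : Provable Rules X) :
    Provable Rules (C.tensor X) :=
  (hC.plug univ hX).of_iso (plug_univ C X)

theorem Provable.bigTensor : ∀ {n : ℕ} {F : Fin n → LGraph},
    (∀ i, Provable Rules (F i)) → Provable Rules (bigTensor n F)
  | 0, _, _ => Relation.ReflTransGen.refl
  | _ + 1, _, h => (h 0).tensor (Provable.bigTensor fun i => h i.succ)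

theorem provable_of_isEmpty [IsEmpty G.V] : Provable Rules G :=
  Deriv.of_iso iso_of_isEmpty

end Derivations

/-- The tensor rule of multiplicative linear logic is derivable in GS. -/
theorem provable_tensor_par {X Y Γ Δ : LGraph} [Nonempty X.V] [Nonempty Δ.V]
    (hXΓ : Provable GSRule (X.par Γ)) (hYΔ : Provable GSRule (Y.par Δ)) :
    Provable GSRule ((X.tensor Y).par (Γ.par Δ)) := by
  -- Plugging `Y ⅋ Δ` next to `X` into `X ⅋ Γ` gives `Γ ⅋ (X ⊗ Y)[Δ]_X`; `ss↓` detaches `Δ`.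
  let S : Set (X.par Γ).V := Sum.elim (univ : Set X.V) (∅ : Set Γ.V)
  let S' : Set (X.tensor Y).V := Sum.elim (univ : Set X.V) (∅ : Set Y.V)
  have hS' : S' ≠ ∅ := nonempty_iff_ne_empty.1 ⟨.inl ‹Nonempty X.V›.some, trivial⟩
  have hprem : ((X.par Γ).plug S (Y.par Δ)).iso (Γ.plug ∅ ((X.tensor Y).plug S' Δ)) := by
    refine ⟨⟨{ toFun := fun
                | .inl (.inl x) => .inr (.inl (.inl x))
                | .inl (.inr g) => .inl g
                | .inr (.inl y) => .inr (.inl (.inr y))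
                | .inr (.inr d) => .inr (.inr d)
               invFun := fun
                | .inl g => .inl (.inr g)
                | .inr (.inl (.inl x)) => .inl (.inl x)
                | .inr (.inl (.inr y)) => .inr (.inl y)
                | .inr (.inr d) => .inr (.inr d)
               left_inv := by rintro ((x | g) | (y | d)) <;> rfl
               right_inv := by rintro (g | (x | y) | d) <;> rfl }, ?_, ?_⟩⟩
    · rintro ((v | v) | (v | v)) ((w | w) | (w | w)) <;> exact Iff.rfl
    · rintro ((v | v) | (v | v)) <;> rfl
  have hconc : ((X.tensor Y).par (Γ.par Δ)).iso (Γ.plug ∅ ((X.tensor Y).par Δ)) := by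
    refine ⟨⟨{ toFun := fun
                | .inl xy => .inr (.inl xy)
                | .inr (.inl g) => .inl g
                | .inr (.inr d) => .inr (.inr d)
               invFun := fun
                | .inl g => .inr (.inl g)
                | .inr (.inl xy) => .inl xy
                | .inr (.inr d) => .inr (.inr d)
               left_inv := by rintro (xy | g | d) <;> rfl
               right_inv := by rintro (g | xy | d) <;> rfl }, ?_, ?_⟩⟩
    · rintro (v | v | v) (w | w | w) <;> exact Iff.rfl
    · rintro (v | v | v) <;> rfl
  exact (hXΓ.plug S hYΔ).deriv
    (Deriv.of_rule_in_context ∅ (GSRule.ss Δ (X.tensor Y) S' ‹_› hS') hprem hconc)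

theorem provable_dual_par_of_iso {G H : LGraph} (h : G.iso H)
    (hH : Provable GSRule (H.dual.par H)) : Provable GSRule (G.dual.par G) :=
  hH.of_iso (par_congr (dual_congr h.symm) h.symm)

theorem provable_dual_par_of_subsingleton {G : LGraph} [Subsingleton G.V] (v : G.V) :
    Provable GSRule (G.dual.par G) :=
  have : Subsingleton G.dual.V := ‹Subsingleton G.V›
  Provable.of_iso (Deriv.of_rule (GSRule.ai (G.label v)))
    (par_congr (single_iso (G := G.dual) v) (single_iso v))

theorem provable_dual_par_of_not_connected {G : LGraph} (hG : ¬ G.Connected)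
    (ih : ∀ H : LGraph, Fintype.card H.V < Fintype.card G.V → Provable GSRule (H.dual.par H)) :
    Provable GSRule (G.dual.par G) := by
  simp only [Connected, not_forall, not_exists, not_and] at hG
  obtain ⟨K, ⟨v, hv⟩, hKu, hK⟩ := hG
  obtain ⟨w, hw⟩ := (ne_univ_iff_exists_notMem K).1 hKu
  have : Nonempty (G.induce K).dual.V := ⟨⟨v, hv⟩⟩
  have : Nonempty (G.induce Kᶜ).V := ⟨⟨w, hw⟩⟩
  have hKc : Kᶜ ≠ univ := compl_ne_univ.2 ⟨v, hv⟩
  exact provable_dual_par_of_iso (par_induce_iso hK).symm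
    ((provable_tensor_par (ih _ (card_induce_lt hKu)) (ih _ (card_induce_lt hKc))).of_iso
      (par_congr (dual_par _ _).symm (iso.refl _)))

theorem provable_dual_par_comp {P : LGraph} {H : P.V → LGraph} (hP : P.Prime)
    (h4 : 4 ≤ Fintype.card P.V) (hne : ∀ p, Nonempty (H p).V)
    (ih : ∀ p, Provable GSRule ((H p).dual.par (H p))) :
    Provable GSRule ((P.comp H).dual.par (P.comp H)) := by
  let e := Fintype.equivFin P.V
  have := (Provable.bigTensor fun i => ih (e.symm i)).deriv <| .of_rule <|
    GSRule.p _ P e (fun i => (H (e.symm i)).dual) (fun i => H (e.symm i)) hP h4 fun i => hne _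
  simpa only [Equiv.symm_apply_apply] using
    this.of_iso (par_congr (dual_comp P fun v => H (e.symm (e v))).symm (iso.refl _))

/-- For every graph `G`, the graph `Ḡ ⅋ G` is provable in GS. -/
theorem identity_provable (G : LGraph) : Provable GSRule (G.dual.par G) := by
  induction hn : Fintype.card G.V using Nat.strong_induction_on generalizing G with
  | _ n ih =>
  replace ih : ∀ H : LGraph, Fintype.card H.V < Fintype.card G.V →
      Provable GSRule (H.dual.par H) := fun H hH => ih _ (hn ▸ hH) H rfl
  rcases subsingleton_or_nontrivial G.V with _ | _
  · rcases isEmpty_or_nonempty G.V with _ | ⟨⟨v⟩⟩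
    · have : IsEmpty (G.dual.par G).V := inferInstanceAs (IsEmpty (G.V ⊕ G.V))
      exact provable_of_isEmpty
    · exact provable_dual_par_of_subsingleton v
  by_cases hG : ¬ G.Connected
  · exact provable_dual_par_of_not_connected hG ih
  by_cases hGd : ¬ G.dual.Connected
  · exact (provable_dual_par_of_not_connected hGd ih).of_iso
      ((par_comm _ _).trans (par_congr (iso.refl _) (dual_dual G)))
  obtain ⟨P, H, hP, h4, hne, hlt, hiso⟩ := exists_prime_comp_iso (not_not.1 hG) (not_not.1 hGd)
  exact provable_dual_par_of_iso hiso.symm (provable_dual_par_comp hP h4 hne fun p => ih _ (hlt p))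

end GSP
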